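/- Let D, L ≥ 1, N = D·L + 1, and suppose D divides K with K ≥ D. Define the row vectors f^T = 1^T M^{K−D} and g^T = 1^T (I + M)^{K−D}, where 1 is the all-ones column vector of length D and M is the D×D matrix built from β_j = D·L/C(D,j). Then g_j = N^{K/D − 1} · f_j for every j ∈ {1,…,D}; in particular f_j/g_j = N^{1 − K/D} whenever g_j ≠ 0. -/

import Mathlib

open Matrix Finset

/-- β_j = D·L / C(D,j). -/
noncomputable def betaPIR (D L j : ℕ) : ℝ := (D * L : ℝ) / (D.choose j : ℝ)

/-- The D×D matrix M: first row all 1/β₁, subdiagonal entries β_j/β_{j+1}, zeros elsewhere. -/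
noncomputable def Mpir (D L : ℕ) : Matrix (Fin D) (Fin D) ℝ :=
  Matrix.of fun i j =>
    if i.val = 0 then 1 / betaPIR D L 1
    else if i.val = j.val + 1 then betaPIR D L (j.val + 1) / betaPIR D L (j.val + 2)
    else 0

/-!
The last basis row vector `e` is cyclic for `M` acting on row vectors: `e ᵥ* M ^ k` is a nonzero
multiple of the basis vector with index `D - 1 - k` for `k < D`, and `e ᵥ* M ^ D` is the constant
vector `1 / (D L)`. Hence a matrix commuting with `M` vanishes as soon as its last row does. By the
binomial theorem the last row of `(1 + M) ^ D` is `∑ₖ C(D,k) e ᵥ* M ^ k`, and since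
`C(D,k) · β_{D-k} = D L` every term with `k < D` is a basis vector, so this row equals
`(D L + 1) • e ᵥ* M ^ D`. Therefore `(1 + M) ^ D = (D L + 1) • M ^ D` (this is Cayley–Hamilton for
`M`), and with `K - D = D r` we get `(1 + M) ^ (K - D) = N ^ r • M ^ (K - D)`.
-/
theorem Matrix.eq_zero_of_commute_of_vecMul_eq_zero {R ι : Type*} [CommSemiring R] [Fintype ι]
    [DecidableEq ι] {M A : Matrix ι ι R} (v : ι → R)
    (hspan : ∀ i, Pi.single i 1 ∈ Submodule.span R (Set.range fun k : ℕ => v ᵥ* M ^ k))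
    (hMA : Commute M A) (hvA : v ᵥ* A = 0) : A = 0 := by
  have hker : Submodule.span R (Set.range fun k : ℕ => v ᵥ* M ^ k) ≤
      LinearMap.ker (vecMulLinear A) := by
    rw [Submodule.span_le]
    rintro _ ⟨k, rfl⟩
    change v ᵥ* M ^ k ᵥ* A = 0
    rw [vecMul_vecMul, (hMA.pow_left k).eq, ← vecMul_vecMul, hvA, zero_vecMul]
  ext i j
  simpa [single_one_vecMul] using congr_fun (hker (hspan i)) j

lemma betaPIR_ne_zero {D L j : ℕ} (hD : 0 < D) (hL : 0 < L) (hj : j ≤ D) :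
    betaPIR D L j ≠ 0 := by
  have := Nat.choose_pos hj
  unfold betaPIR
  positivity

lemma choose_mul_betaPIR {D j : ℕ} (L : ℕ) (hj : j ≤ D) :
    (D.choose j : ℝ) * betaPIR D L j = D * L :=
  mul_div_cancel₀ _ (Nat.cast_ne_zero.2 (Nat.choose_pos hj).ne')

lemma betaPIR_self (D L : ℕ) : betaPIR D L D = D * L := by
  simp [betaPIR]

section

variable {n L : ℕ}

lemma single_zero_vecMul_Mpir :
    Pi.single 0 1 ᵥ* Mpir (n + 1) L = fun _ => 1 / betaPIR (n + 1) L 1 := by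
  ext j
  simp [Mpir]

lemma single_succ_vecMul_Mpir (i : Fin n) :
    Pi.single i.succ 1 ᵥ* Mpir (n + 1) L =
      (betaPIR (n + 1) L (i + 1) / betaPIR (n + 1) L (i + 2)) • Pi.single i.castSucc 1 := by
  ext j
  simp only [single_one_vecMul, row, Mpir, of_apply, Fin.val_succ, Pi.smul_apply,
    Pi.single_apply, Fin.ext_iff, Fin.val_castSucc]
  rcases eq_or_ne (j : ℕ) i with h | h
  · simp [h]
  · simp [h, Ne.symm h]

lemma single_last_vecMul_Mpir_pow (hL : 0 < L) (k : Fin (n + 1)) :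
    Pi.single (Fin.last n) 1 ᵥ* Mpir (n + 1) L ^ (k : ℕ) =
      (betaPIR (n + 1) L (k.rev + 1) / betaPIR (n + 1) L (n + 1)) • Pi.single k.rev 1 := by
  induction k using Fin.induction with
  | zero => simp [div_self (betaPIR_ne_zero n.succ_pos hL le_rfl)]
  | succ i ih =>
    rw [Fin.val_succ, Fin.val_castSucc] at *
    rw [pow_succ, ← vecMul_vecMul, ih, smul_vecMul, Fin.rev_castSucc,
      single_succ_vecMul_Mpir, smul_smul, Fin.rev_succ]
    congr 1
    exact div_mul_div_cancel₀' (betaPIR_ne_zero n.succ_pos hL (by omega)) _ _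

lemma single_last_vecMul_Mpir_pow_self (hL : 0 < L) :
    Pi.single (Fin.last n) 1 ᵥ* Mpir (n + 1) L ^ (n + 1) =
      fun _ => 1 / betaPIR (n + 1) L (n + 1) := by
  have h := single_last_vecMul_Mpir_pow hL (Fin.last n)
  rw [Fin.val_last, Fin.rev_last] at h
  rw [pow_succ, ← vecMul_vecMul, h, smul_vecMul, single_zero_vecMul_Mpir]
  ext j
  simp only [Pi.smul_apply, smul_eq_mul, Fin.val_zero]
  field_simp [betaPIR_ne_zero n.succ_pos hL (by omega : 1 ≤ n + 1)]

lemma choose_smul_single_last_vecMul_Mpir_pow (hL : 0 < L) (k : Fin (n + 1)) :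
    ((n + 1).choose k : ℝ) • (Pi.single (Fin.last n) 1 ᵥ* Mpir (n + 1) L ^ (k : ℕ)) =
      Pi.single k.rev 1 := by
  have hchoose : (n + 1).choose k = (n + 1).choose (k.rev + 1) := by
    rw [Fin.val_rev, show n + 1 - (k + 1) + 1 = n + 1 - k by omega, Nat.choose_symm k.is_lt.le]
  rw [single_last_vecMul_Mpir_pow hL, smul_smul, ← mul_div_assoc, hchoose,
    choose_mul_betaPIR L (by omega), betaPIR_self, div_self (by positivity), one_smul]

lemma single_last_vecMul_one_add_Mpir_pow (hL : 0 < L) :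
    Pi.single (Fin.last n) 1 ᵥ* (1 + Mpir (n + 1) L) ^ (n + 1) =
      (((n + 1 : ℕ) : ℝ) * L + 1) • (Pi.single (Fin.last n) 1 ᵥ* Mpir (n + 1) L ^ (n + 1)) := by
  have hterm (k : Fin (n + 1)) : Pi.single (Fin.last n) 1 ᵥ*
      (Mpir (n + 1) L ^ (k : ℕ) * 1 ^ (n + 1 - k) * ((n + 1).choose k : Matrix _ _ ℝ)) =
        Pi.single k.rev 1 := by
    rw [one_pow, mul_one, ← nsmul_eq_mul', ← Nat.cast_smul_eq_nsmul ℝ, vecMul_smul,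
      choose_smul_single_last_vecMul_Mpir_pow hL]
  have hsum : ∑ k : Fin (n + 1), (Pi.single k.rev 1 : Fin (n + 1) → ℝ) = fun _ => 1 :=
    (Equiv.sum_comp Fin.revPerm fun i => Pi.single i (1 : ℝ)).trans (univ_sum_single _)
  rw [add_comm 1, (Commute.one_right _).add_pow, vecMul_sum, sum_range_succ, sum_range,
    Fintype.sum_congr _ _ hterm, hsum, Nat.choose_self, Nat.cast_one, mul_one, Nat.sub_self,
    pow_zero, mul_one, single_last_vecMul_Mpir_pow_self hL, betaPIR_self]
  ext
  simp only [Pi.add_apply, Pi.smul_apply, smul_eq_mul]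
  field_simp

end

theorem one_add_Mpir_pow {D L : ℕ} (hD : 0 < D) (hL : 0 < L) :
    (1 + Mpir D L) ^ D = ((D : ℝ) * L + 1) • Mpir D L ^ D := by
  obtain ⟨n, rfl⟩ := Nat.exists_eq_add_one_of_ne_zero hD.ne'
  rw [← sub_eq_zero]
  refine eq_zero_of_commute_of_vecMul_eq_zero (M := Mpir (n + 1) L) (Pi.single (Fin.last n) 1)
    (fun i => ?_) ?_ ?_
  · rw [← Fin.rev_rev i, ← choose_smul_single_last_vecMul_Mpir_pow hL]
    exact Submodule.smul_mem _ _ (Submodule.subset_span ⟨_, rfl⟩)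
  · exact (((Commute.one_right _).add_right (Commute.refl _)).pow_right _).sub_right
      (((Commute.refl _).pow_right _).smul_right _)
  · rw [vecMul_sub, vecMul_smul, single_last_vecMul_one_add_Mpir_pow hL, sub_self]

theorem g_eq_power_mul_f (D L K : ℕ) (hD : 1 ≤ D) (hL : 1 ≤ L) (hDK : D ∣ K) (hK : D ≤ K)
    (f g : Fin D → ℝ)
    (hf : ∀ j, f j = ∑ i, ((Mpir D L) ^ (K - D)) i j)
    (hg : ∀ j, g j = ∑ i, ((1 + Mpir D L) ^ (K - D)) i j) :
    (∀ j, g j = ((D * L + 1 : ℝ)) ^ (K / D - 1) * f j) ∧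
      (∀ j, g j ≠ 0 → f j / g j = ((D * L + 1 : ℝ)) ^ ((1 : ℤ) - (K / D : ℤ))) := by
  obtain ⟨q, rfl⟩ := hDK
  obtain ⟨r, rfl⟩ : ∃ r, q = r + 1 :=
    Nat.exists_eq_add_one_of_ne_zero (by rintro rfl; omega)
  have hsub : D * (r + 1) - D = D * r := by rw [Nat.mul_succ, Nat.add_sub_cancel]
  have hdiv : D * (r + 1) / D = r + 1 := Nat.mul_div_cancel_left _ hD
  have hgf (j : Fin D) : g j = ((D * L + 1 : ℝ)) ^ r * f j := by
    rw [hg, hf, hsub, pow_mul, pow_mul, one_add_Mpir_pow hD hL, smul_pow, mul_sum]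
    simp only [Matrix.smul_apply, smul_eq_mul]
  refine ⟨by simpa [hdiv] using hgf, fun j hgj => ?_⟩
  have hfj : f j ≠ 0 := fun h => hgj (by rw [hgf, h, mul_zero])
  have hexp : (1 : ℤ) - ((D * (r + 1) : ℕ) : ℤ) / (D : ℤ) = -r := by
    push_cast
    rw [Int.mul_ediv_cancel_left _ (by omega)]
    ring
  rw [hexp, _root_.zpow_neg, zpow_natCast, hgf, div_mul_cancel_right₀ hfj]
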